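/- Let N ≥ 2 be an integer, α ∈ (0,2), Ω ⊆ ℝ^N a bounded open set with 0 ∈ Ω, and let R₀ > 0 be such that B(0, 8R₀) ⊆ Ω. Then for every smooth function u : ℝ^N → ℝ with compact support contained in Ω, there exists a constant C > 0 (depending on u, α, Ω but independent of ε) such that for all ε ∈ (0, R₀), ∫_Ω (div(ψ_ε(|x|)^α ∇u(x)))² dx ≤ C, where div(ψ_ε(|x|)^α ∇u) = ψ_ε(|x|)^α Δu + α ψ_ε(|x|)^{α−1} ∇(ψ_ε∘|·|)·∇u. -/

import Mathlib

open MeasureTheory Metric Set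

/-- The regularized absolute value: `ψ_ε(x) = |x|` for `|x| ≥ ε` and
`ψ_ε(x) = 3ε/8 + (3/(4ε))x² - (1/(8ε³))x⁴` for `|x| ≤ ε`. -/
noncomputable def psi (ε : ℝ) (x : ℝ) : ℝ :=
  if ε ≤ |x| then |x| else 3 * ε / 8 + 3 / (4 * ε) * x ^ 2 - 1 / (8 * ε ^ 3) * x ^ 4

/-- The Euclidean Laplacian of `u : ℝ^N → ℝ`, written as the sum of
second partial derivatives in the coordinate directions. -/
noncomputable def lap {N : ℕ} (u : EuclideanSpace ℝ (Fin N) → ℝ)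
    (x : EuclideanSpace ℝ (Fin N)) : ℝ :=
  ∑ i, fderiv ℝ (fun y => fderiv ℝ u y (EuclideanSpace.single i (1 : ℝ))) x
      (EuclideanSpace.single i (1 : ℝ))




lemma psi_eq_abs {ε x : ℝ} (h : ε ≤ |x|) : psi ε x = |x| := if_pos h

lemma psi_eq_poly {ε x : ℝ} (hε : 0 < ε) (h : |x| ≤ ε) :
    psi ε x = 3 * ε / 8 + 3 / (4 * ε) * x ^ 2 - 1 / (8 * ε ^ 3) * x ^ 4 := by
  unfold psi
  rcases lt_or_ge (|x|) ε with h' | h'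
  · rw [if_neg (not_le.mpr h')]
  · have hx : |x| = ε := le_antisymm h h'
    rw [if_pos h', hx]
    have hx2 : x ^ 2 = ε ^ 2 := by rw [← sq_abs, hx]
    have hx4 : x ^ 4 = ε ^ 4 := by
      have : x ^ 4 = (x ^ 2) ^ 2 := by ring
      rw [this, hx2]; ring
    rw [hx2, hx4]
    field_simp
    ring

lemma psi_pos {ε : ℝ} (hε : 0 < ε) (x : ℝ) : 0 < psi ε x := by
  unfold psi
  split_ifs with h
  · linarith
  · push_neg at h
    have hx2 : x ^ 2 < ε ^ 2 := by
      have := abs_nonneg x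
      nlinarith [sq_abs x]
    have key : 3 * ε / 8 + 3 / (4 * ε) * x ^ 2 - 1 / (8 * ε ^ 3) * x ^ 4
        = (3 * ε ^ 4 + 6 * ε ^ 2 * x ^ 2 - x ^ 4) / (8 * ε ^ 3) := by
      field_simp; ring
    rw [key]
    apply div_pos
    · nlinarith [sq_nonneg x, sq_nonneg (x^2)]
    · positivity

lemma psi_le_add {ε x : ℝ} (hε : 0 < ε) : psi ε x ≤ |x| + ε := by
  unfold psi
  split_ifs with h
  · linarith
  · push_neg at h
    have hx2 : x ^ 2 ≤ ε ^ 2 := by nlinarith [sq_abs x, abs_nonneg x]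
    have key : 3 * ε / 8 + 3 / (4 * ε) * x ^ 2 - 1 / (8 * ε ^ 3) * x ^ 4 ≤ ε := by
      rw [show (3 : ℝ) * ε / 8 + 3 / (4 * ε) * x ^ 2 - 1 / (8 * ε ^ 3) * x ^ 4
        = (3 * ε ^ 4 + 6 * ε ^ 2 * x ^ 2 - x ^ 4) / (8 * ε ^ 3) by field_simp; ring]
      rw [div_le_iff₀ (by positivity)]
      nlinarith [sq_nonneg (ε^2 - x^2), sq_nonneg x, sq_nonneg (x^2)]
    have := abs_nonneg x
    linarith

lemma psi_ge {ε : ℝ} (hε : 0 < ε) (x : ℝ) : 3 / 8 * |x| ≤ psi ε x := by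
  unfold psi
  split_ifs with h
  · nlinarith [abs_nonneg x]
  · push_neg at h
    have hx2 : x ^ 2 ≤ ε ^ 2 := by nlinarith [sq_abs x, abs_nonneg x]
    have key : 3 * ε / 8 ≤ 3 * ε / 8 + 3 / (4 * ε) * x ^ 2 - 1 / (8 * ε ^ 3) * x ^ 4 := by
      have : (0:ℝ) ≤ 3 / (4 * ε) * x ^ 2 - 1 / (8 * ε ^ 3) * x ^ 4 := by
        rw [show 3 / (4 * ε) * x ^ 2 - 1 / (8 * ε ^ 3) * x ^ 4
          = x ^ 2 * (6 * ε ^ 2 - x ^ 2) / (8 * ε ^ 3) by field_simp; ring]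
        apply div_nonneg _ (by positivity)
        nlinarith [sq_nonneg x]
      linarith
    linarith



noncomputable def psiD (ε : ℝ) (x : ℝ) : ℝ :=
  if ε ≤ |x| then (if 0 ≤ x then 1 else -1) else 3 / (2 * ε) * x - 1 / (2 * ε ^ 3) * x ^ 3

lemma hasDerivAt_poly (ε x : ℝ) :
    HasDerivAt (fun y => 3 * ε / 8 + 3 / (4 * ε) * y ^ 2 - 1 / (8 * ε ^ 3) * y ^ 4)
      (3 / (2 * ε) * x - 1 / (2 * ε ^ 3) * x ^ 3) x := by
  have h : HasDerivAt (fun y : ℝ => 3 * ε / 8 + 3 / (4 * ε) * y ^ 2 - 1 / (8 * ε ^ 3) * y ^ 4)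
      (3 / (4 * ε) * (2 * x ^ 1) - 1 / (8 * ε ^ 3) * (4 * x ^ 3)) x := by
    exact (((hasDerivAt_pow 2 x).const_mul (3 / (4 * ε))).const_add (3 * ε / 8)).sub
      ((hasDerivAt_pow 4 x).const_mul (1 / (8 * ε ^ 3)))
  convert h using 1
  ring

lemma abs_psiD_le {ε : ℝ} (hε : 0 < ε) (x : ℝ) : |psiD ε x| ≤ 1 := by
  unfold psiD
  split_ifs with h h'
  · simp
  · simp
  · push_neg at h
    have hx2 : x ^ 2 ≤ ε ^ 2 := by nlinarith [sq_abs x, abs_nonneg x, abs_le.mp (le_of_lt h)]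
    have hx : -ε ≤ x ∧ x ≤ ε := abs_le.mp h.le
    rw [abs_le]
    constructor
    · rw [show 3 / (2 * ε) * x - 1 / (2 * ε ^ 3) * x ^ 3
        = (3 * ε ^ 2 * x - x ^ 3) / (2 * ε ^ 3) by field_simp]
      rw [le_div_iff₀ (by positivity)]
      nlinarith [mul_nonneg (sq_nonneg (ε + x)) (by linarith : (0:ℝ) ≤ 2 * ε - x)]
    · rw [show 3 / (2 * ε) * x - 1 / (2 * ε ^ 3) * x ^ 3
        = (3 * ε ^ 2 * x - x ^ 3) / (2 * ε ^ 3) by field_simp]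
      rw [div_le_iff₀ (by positivity)]
      nlinarith [mul_nonneg (sq_nonneg (ε - x)) (by linarith : (0:ℝ) ≤ 2 * ε + x)]

lemma psi_hasDerivAt {ε : ℝ} (hε : 0 < ε) (x : ℝ) : HasDerivAt (psi ε) (psiD ε x) x := by
  rcases lt_trichotomy (|x|) ε with h | h | h
  · -- interior polynomial region
    have hD : psiD ε x = 3 / (2 * ε) * x - 1 / (2 * ε ^ 3) * x ^ 3 := if_neg (not_le.mpr h)
    rw [hD]
    refine (hasDerivAt_poly ε x).congr_of_eventuallyEq ?_
    have : {y : ℝ | |y| < ε} ∈ nhds x := by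
      have : IsOpen {y : ℝ | |y| < ε} := isOpen_lt (continuous_abs) continuous_const
      exact this.mem_nhds h
    filter_upwards [this] with y hy
    exact psi_eq_poly hε (le_of_lt hy)
  · -- boundary |x| = ε
    have hxne : x = ε ∨ x = -ε := abs_eq (le_of_lt hε) |>.mp h
    rcases hxne with h1 | h1
    · rw [h1]
      have hD : psiD ε ε = 1 := by
        rw [psiD, if_pos (le_of_eq (abs_of_pos hε).symm), if_pos (le_of_lt hε)]
      rw [hD]
      -- right part : on Ici ε, psi = id
      have hright : HasDerivWithinAt (psi ε) 1 (Set.Ici ε) ε := by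
        refine (hasDerivAt_id ε).hasDerivWithinAt.congr (fun y hy => ?_) ?_
        · rw [psi_eq_abs (by rw [abs_of_pos (lt_of_lt_of_le hε hy)]; exact hy),
            abs_of_pos (lt_of_lt_of_le hε hy)]; rfl
        · rw [psi_eq_abs (le_of_eq (abs_of_pos hε).symm), abs_of_pos hε]; rfl
      have hleft : HasDerivWithinAt (psi ε) 1 (Set.Icc (-ε) ε) ε := by
        have hpd : (3 / (2 * ε) * ε - 1 / (2 * ε ^ 3) * ε ^ 3) = 1 := by field_simp; ring
        have hpoly := (hasDerivAt_poly ε ε).hasDerivWithinAt (s := Set.Icc (-ε) ε)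
        rw [hpd] at hpoly
        exact hpoly.congr (fun y hy => psi_eq_poly hε (abs_le.mpr ⟨hy.1, hy.2⟩))
          (psi_eq_poly hε (by rw [abs_of_pos hε]))
      have := hleft.union hright
      rw [show Set.Icc (-ε) ε ∪ Set.Ici ε = Set.Ici (-ε) by
        rw [Set.Icc_union_Ici_eq_Ici (by linarith)]] at this
      exact this.hasDerivAt (Ici_mem_nhds (by linarith))
    · rw [h1]
      have hD : psiD ε (-ε) = -1 := by
        rw [psiD, if_pos (by rw [abs_neg, abs_of_pos hε]), if_neg (by simp; linarith)]
      rw [hD]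
      have hright : HasDerivWithinAt (psi ε) (-1) (Set.Iic (-ε)) (-ε) := by
        refine (hasDerivAt_neg (-ε)).hasDerivWithinAt.congr (fun y hy => ?_) ?_
        · have hy' : y ≤ -ε := hy
          rw [psi_eq_abs (by rw [abs_of_nonpos (by linarith)]; linarith),
            abs_of_nonpos (by linarith)]
        · rw [psi_eq_abs (by rw [abs_neg, abs_of_pos hε]), abs_neg, abs_of_pos hε, neg_neg]
      have hleft : HasDerivWithinAt (psi ε) (-1) (Set.Icc (-ε) ε) (-ε) := by
        have hpd : (3 / (2 * ε) * (-ε) - 1 / (2 * ε ^ 3) * (-ε) ^ 3) = -1 := by field_simp; ring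
        have hpoly := (hasDerivAt_poly ε (-ε)).hasDerivWithinAt (s := Set.Icc (-ε) ε)
        rw [hpd] at hpoly
        exact hpoly.congr (fun y hy => psi_eq_poly hε (abs_le.mpr ⟨hy.1, hy.2⟩))
          (psi_eq_poly hε (by rw [abs_neg, abs_of_pos hε]))
      have := hright.union hleft
      rw [show Set.Iic (-ε) ∪ Set.Icc (-ε) ε = Set.Iic ε by
        rw [Set.Iic_union_Icc_eq_Iic (by linarith)]] at this
      exact this.hasDerivAt (Iic_mem_nhds (by linarith))
  · -- outer region |x| > ε
    have hD : psiD ε x = if 0 ≤ x then 1 else -1 := if_pos h.le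
    have hx0 : x ≠ 0 := by intro h0; rw [h0] at h; simp at h; linarith
    rcases lt_or_gt_of_ne hx0 with hneg | hpos
    · have : psiD ε x = -1 := by rw [hD, if_neg (not_le.mpr hneg)]
      rw [this]
      refine (hasDerivAt_neg x).congr_of_eventuallyEq ?_
      have hmem : {y : ℝ | y < -ε} ∈ nhds x := by
        have : IsOpen {y : ℝ | y < -ε} := isOpen_lt continuous_id continuous_const
        refine this.mem_nhds ?_
        have := abs_of_neg hneg; simp only [Set.mem_setOf_eq]; linarith [h.le, abs_of_neg hneg]
      filter_upwards [hmem] with y hy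
      have hy' : y < -ε := hy
      rw [psi_eq_abs (by rw [abs_of_neg (by linarith)]; linarith), abs_of_neg (by linarith)]
    · have : psiD ε x = 1 := by rw [hD, if_pos hpos.le]
      rw [this]
      refine (hasDerivAt_id x).congr_of_eventuallyEq ?_
      have hmem : {y : ℝ | ε < y} ∈ nhds x := by
        have : IsOpen {y : ℝ | ε < y} := isOpen_lt continuous_const continuous_id
        refine this.mem_nhds ?_
        simp only [Set.mem_setOf_eq]; linarith [abs_of_pos hpos]
      filter_upwards [hmem] with y hy
      have hy' : ε < y := hy
      rw [psi_eq_abs (by rw [abs_of_pos (by linarith)]; linarith), abs_of_pos (by linarith)]; rfl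

lemma psi_lipschitz {ε : ℝ} (hε : 0 < ε) : LipschitzWith 1 (psi ε) := by
  apply lipschitzWith_of_nnnorm_deriv_le (fun x => (psi_hasDerivAt hε x).differentiableAt)
  intro x
  rw [(psi_hasDerivAt hε x).deriv]
  rw [← NNReal.coe_le_coe, coe_nnnorm, Real.norm_eq_abs, NNReal.coe_one]
  exact abs_psiD_le hε x



lemma integrableOn_norm_rpow_ball {N : ℕ} (hN : 1 ≤ N) {q : ℝ} (hqN : -(N:ℝ) < q)
    (hq0 : q < 0) (r : ℝ) :
    IntegrableOn (fun x : EuclideanSpace ℝ (Fin N) => ‖x‖ ^ q) (Metric.ball 0 r) := by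
  set E := EuclideanSpace ℝ (Fin N)
  set μ := volume.restrict (Metric.ball (0:E) r) with hμ
  have hfin : volume (Metric.ball (0:E) r) < ⊤ := measure_ball_lt_top
  have hrank : Module.finrank ℝ E = N := finrank_euclideanSpace_fin
  constructor
  · exact (Measurable.aestronglyMeasurable (by fun_prop))
  · rw [HasFiniteIntegral]
    have hnn : ∀ x : E, 0 ≤ ‖x‖ ^ q := fun x => Real.rpow_nonneg (norm_nonneg x) q
    have heq : (∫⁻ a, ‖(‖a‖ : ℝ) ^ q‖ₑ ∂μ) = ∫⁻ a, ENNReal.ofReal (‖a‖ ^ q) ∂μ :=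
      lintegral_enorm_of_nonneg fun x => hnn x
    rw [heq, lintegral_eq_lintegral_meas_le μ (Filter.Eventually.of_forall hnn)
      (Measurable.aemeasurable (by fun_prop))]
    have hsub : ∀ t : ℝ, 0 < t →
        {a : E | t ≤ ‖a‖ ^ q} ⊆ Metric.closedBall 0 (t ^ q⁻¹) := by
      intro t ht a ha
      simp only [Set.mem_setOf_eq] at ha
      rcases eq_or_ne a 0 with rfl | ha0
      · exfalso
        rw [norm_zero, Real.zero_rpow (ne_of_lt hq0)] at ha
        linarith
      · have hna : 0 < ‖a‖ := norm_pos_iff.mpr ha0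
        rw [Metric.mem_closedBall, dist_zero_right]
        have h1 : (‖a‖ ^ q) ^ q⁻¹ ≤ t ^ q⁻¹ :=
          Real.rpow_le_rpow_of_nonpos ht ha (le_of_lt (inv_neg''.mpr hq0))
        rwa [← Real.rpow_mul hna.le, mul_inv_cancel₀ (ne_of_lt hq0), Real.rpow_one] at h1
    have hμS_ball : ∀ t : ℝ, μ {a : E | t ≤ ‖a‖ ^ q} ≤ volume (Metric.ball (0:E) r) := by
      intro t
      calc μ {a : E | t ≤ ‖a‖ ^ q} ≤ μ Set.univ := measure_mono (Set.subset_univ _)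
        _ = volume (Metric.ball (0:E) r) := by rw [hμ, Measure.restrict_apply_univ]
    have hμS_cb : ∀ t : ℝ, 0 < t → μ {a : E | t ≤ ‖a‖ ^ q}
        ≤ ENNReal.ofReal (t ^ (q⁻¹ * N)) * volume (Metric.ball (0:E) 1) := by
      intro t ht
      calc μ {a : E | t ≤ ‖a‖ ^ q} ≤ volume {a : E | t ≤ ‖a‖ ^ q} :=
            Measure.restrict_le_self _
        _ ≤ volume (Metric.closedBall (0:E) (t ^ q⁻¹)) := measure_mono (hsub t ht)
        _ = ENNReal.ofReal ((t ^ q⁻¹) ^ Module.finrank ℝ E) * volume (Metric.ball (0:E) 1) :=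
            Measure.addHaar_closedBall volume 0 (Real.rpow_nonneg ht.le _)
        _ = ENNReal.ofReal (t ^ (q⁻¹ * N)) * volume (Metric.ball (0:E) 1) := by
            rw [hrank, ← Real.rpow_natCast (t ^ q⁻¹) N, ← Real.rpow_mul ht.le]
    calc ∫⁻ t in Set.Ioi (0:ℝ), μ {a : E | t ≤ ‖a‖ ^ q}
        ≤ ∫⁻ t in Set.Ioc (0:ℝ) 1 ∪ Set.Ioi 1, μ {a : E | t ≤ ‖a‖ ^ q} :=
          lintegral_mono_set Set.Ioi_subset_Ioc_union_Ioi
      _ ≤ (∫⁻ t in Set.Ioc (0:ℝ) 1, μ {a : E | t ≤ ‖a‖ ^ q})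
          + ∫⁻ t in Set.Ioi (1:ℝ), μ {a : E | t ≤ ‖a‖ ^ q} := lintegral_union_le _ _ _
      _ < ⊤ := by
          apply ENNReal.add_lt_top.2
          constructor
          · calc (∫⁻ t in Set.Ioc (0:ℝ) 1, μ {a : E | t ≤ ‖a‖ ^ q})
                ≤ ∫⁻ _ in Set.Ioc (0:ℝ) 1, volume (Metric.ball (0:E) r) :=
                  setLIntegral_mono' measurableSet_Ioc (fun t _ => hμS_ball t)
              _ = volume (Metric.ball (0:E) r) * volume (Set.Ioc (0:ℝ) 1) :=
                  setLIntegral_const _ _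
              _ < ⊤ := by
                  apply ENNReal.mul_lt_top hfin
                  simp [Real.volume_Ioc]
          · have hlt : q⁻¹ * N < -1 := by
              rw [← div_eq_inv_mul]
              rw [div_lt_iff_of_neg hq0]
              linarith
            calc (∫⁻ t in Set.Ioi (1:ℝ), μ {a : E | t ≤ ‖a‖ ^ q})
                ≤ ∫⁻ t in Set.Ioi (1:ℝ),
                    ENNReal.ofReal (t ^ (q⁻¹ * N)) * volume (Metric.ball (0:E) 1) :=
                  setLIntegral_mono' measurableSet_Ioi
                    (fun t ht => hμS_cb t (lt_trans one_pos ht))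
              _ = (∫⁻ t in Set.Ioi (1:ℝ), ENNReal.ofReal (t ^ (q⁻¹ * N)))
                    * volume (Metric.ball (0:E) 1) :=
                  lintegral_mul_const' _ _ measure_ball_lt_top.ne
              _ < ⊤ := by
                  apply ENNReal.mul_lt_top _ measure_ball_lt_top
                  exact (integrableOn_Ioi_rpow_of_lt hlt one_pos).setLIntegral_lt_top



section helpers

variable {N : ℕ}

local notation "E" => EuclideanSpace ℝ (Fin N)


lemma norm_gradient_le_one {f : E → ℝ} (hf : LipschitzWith 1 f) (x : E) :
    ‖gradient f x‖ ≤ 1 := by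
  have : ‖gradient f x‖ = ‖fderiv ℝ f x‖ := by
    rw [gradient, LinearIsometryEquiv.norm_map]
  rw [this]
  simpa using norm_fderiv_le_of_lipschitz ℝ hf


lemma lap_bound (u : E → ℝ) (hu : ContDiff ℝ (⊤ : ℕ∞) u) (hcpt : HasCompactSupport u) :
    ∃ M, ∀ x, |lap u x| ≤ M := by
  have h1 : ContDiff ℝ (⊤ : ℕ∞) (fderiv ℝ u) := hu.fderiv_right (by simp)
  have hterm : ∀ i : Fin N, Continuous (fun x : E =>
      fderiv ℝ (fun y => fderiv ℝ u y (EuclideanSpace.single i (1 : ℝ))) x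
        (EuclideanSpace.single i (1 : ℝ))) := by
    intro i
    have hg : ContDiff ℝ (⊤ : ℕ∞) (fun y : E => fderiv ℝ u y (EuclideanSpace.single i (1 : ℝ))) :=
      h1.clm_apply contDiff_const
    have : ContDiff ℝ (⊤ : ℕ∞) (fderiv ℝ (fun y : E => fderiv ℝ u y (EuclideanSpace.single i (1 : ℝ)))) :=
      hg.fderiv_right (by simp)
    exact this.continuous.clm_apply continuous_const
  have hc : Continuous (lap u) := by
    apply continuous_finset_sum
    intro i _
    exact hterm i
  have hsupp : Function.support (lap u) ⊆ tsupport u := by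
    intro x hx
    by_contra hxmem
    apply hx
    have hopen : IsOpen (tsupport u)ᶜ := (isClosed_tsupport u).isOpen_compl
    have hmem : (tsupport u)ᶜ ∈ nhds x := hopen.mem_nhds hxmem
    have : lap u x = 0 := by
      unfold lap
      apply Finset.sum_eq_zero
      intro i _
      have hev : (fun y : E => fderiv ℝ u y (EuclideanSpace.single i (1 : ℝ)))
          =ᶠ[nhds x] (fun _ => (0 : ℝ)) := by
        filter_upwards [hmem] with y hy
        have : fderiv ℝ u y = 0 := by
          by_contra h
          exact hy (support_fderiv_subset ℝ (f := u) h)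
        rw [this]; rfl
      rw [hev.fderiv_eq, fderiv_fun_const]
      rfl
    exact this
  have hlapcpt : HasCompactSupport (lap u) := hcpt.mono' hsupp
  obtain ⟨C, hC⟩ := hlapcpt.exists_bound_of_continuous hc
  exact ⟨C, fun x => by simpa using hC x⟩

lemma gradient_bound (u : E → ℝ) (hu : ContDiff ℝ (⊤ : ℕ∞) u) (hcpt : HasCompactSupport u) :
    ∃ M, ∀ x, ‖gradient u x‖ ≤ M := by
  obtain ⟨C, hC⟩ := (hcpt.fderiv ℝ).exists_bound_of_continuous (hu.continuous_fderiv (by simp))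
  refine ⟨C, fun x => ?_⟩
  have : ‖gradient u x‖ = ‖fderiv ℝ u x‖ := by
    rw [gradient, LinearIsometryEquiv.norm_map]
  rw [this]; exact hC x

lemma volume_singleton_zero (hN : 1 ≤ N) : volume ({(0 : E)} : Set (EuclideanSpace ℝ (Fin N))) = 0 := by
  have h := Measure.addHaar_closedBall (volume : Measure (EuclideanSpace ℝ (Fin N))) 0 (le_refl (0:ℝ))
  rw [Metric.closedBall_zero] at h
  rw [h, zero_pow, ENNReal.ofReal_zero, zero_mul]
  rw [finrank_euclideanSpace_fin]
  omega

end helpers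

/-- For `u ∈ C_c^∞(Ω)`, the quantities `∫_Ω (div(ψ_ε(|x|)^α ∇u))² dx` are bounded
by a constant independent of `ε ∈ (0, R₀)`, where
`div(ψ_ε(|x|)^α ∇u) = ψ_ε(|x|)^α Δu + α ψ_ε(|x|)^{α-1} ∇(ψ_ε∘|·|)·∇u`. -/
theorem uniform_bound_approximating_operator
    (N : ℕ) (hN : 2 ≤ N) (α : ℝ) (hα : α ∈ Set.Ioo (0 : ℝ) 2)
    (Ω : Set (EuclideanSpace ℝ (Fin N))) (hΩo : IsOpen Ω)
    (hΩb : Bornology.IsBounded Ω) (h0 : (0 : EuclideanSpace ℝ (Fin N)) ∈ Ω)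
    (R₀ : ℝ) (hR₀ : 0 < R₀)
    (hball : Metric.ball (0 : EuclideanSpace ℝ (Fin N)) (8 * R₀) ⊆ Ω)
    (u : EuclideanSpace ℝ (Fin N) → ℝ) (hu : ContDiff ℝ (⊤ : ℕ∞) u)
    (hcpt : HasCompactSupport u) (hsupp : tsupport u ⊆ Ω) :
    ∃ C > 0, ∀ ε ∈ Set.Ioo (0 : ℝ) R₀,
      (∫ x in Ω, ((psi ε ‖x‖) ^ α * lap u x
          + α * (psi ε ‖x‖) ^ (α - 1) *
            (inner ℝ (gradient (fun y : EuclideanSpace ℝ (Fin N) => psi ε ‖y‖) x)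
              (gradient u x) : ℝ)) ^ 2) ≤ C := by
  obtain ⟨hα0, hα2⟩ := hα
  obtain ⟨r, hr0, hrΩ⟩ := hΩb.subset_ball_lt 0 0
  obtain ⟨M₁, hM₁⟩ := lap_bound u hu hcpt
  obtain ⟨M₂, hM₂⟩ := gradient_bound u hu hcpt
  have hM₁0 : 0 ≤ M₁ := le_trans (abs_nonneg _) (hM₁ 0)
  have hM₂0 : 0 ≤ M₂ := le_trans (norm_nonneg _) (hM₂ 0)
  set D : ℝ := r + R₀ with hD
  have hD0 : 0 < D := by positivity
  set c₄ : ℝ := max (D ^ (2 * α - 2)) ((3 / 8 : ℝ) ^ (2 * α - 2)) with hc₄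
  have hc₄0 : 0 ≤ c₄ := le_trans (Real.rpow_nonneg hD0.le _) (le_max_left _ _)
  set K₁ : ℝ := 2 * (D ^ α) ^ 2 * M₁ ^ 2 + 2 * α ^ 2 * c₄ * M₂ ^ 2 with hK₁
  set K₂ : ℝ := 2 * α ^ 2 * c₄ * M₂ ^ 2 with hK₂
  have hK₁0 : 0 ≤ K₁ := by positivity
  have hK₂0 : 0 ≤ K₂ := by positivity
  set g : EuclideanSpace ℝ (Fin N) → ℝ := fun x => K₁ + K₂ * ‖x‖ ^ (2 * α - 2) with hg
  have hg0 : ∀ x, 0 ≤ g x := by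
    intro x
    have : 0 ≤ ‖x‖ ^ (2 * α - 2) := Real.rpow_nonneg (norm_nonneg x) _
    positivity
  -- integrability of the dominating function
  have hΩfin : volume Ω < ⊤ :=
    lt_of_le_of_lt (measure_mono hrΩ) measure_ball_lt_top
  have hrpow_int : IntegrableOn (fun x : EuclideanSpace ℝ (Fin N) => ‖x‖ ^ (2 * α - 2)) Ω := by
    rcases lt_or_ge (2 * α - 2) 0 with hneg | hpos
    · have hN2 : (2:ℝ) ≤ (N:ℝ) := by exact_mod_cast hN
      exact (integrableOn_norm_rpow_ball (by omega) (by linarith) hneg r).mono_set hrΩ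
    · refine Measure.integrableOn_of_bounded (M := (max r 1) ^ (2 * α - 2)) hΩfin.ne
        (Measurable.aestronglyMeasurable (by fun_prop)) ?_
      filter_upwards [ae_restrict_mem hΩo.measurableSet] with x hx
      rw [Real.norm_eq_abs, abs_of_nonneg (Real.rpow_nonneg (norm_nonneg x) _)]
      apply Real.rpow_le_rpow (norm_nonneg x) _ hpos
      have : ‖x‖ < r := by simpa [Metric.mem_ball, dist_zero_right] using hrΩ hx
      exact le_trans this.le (le_max_left r 1)
  have hgint : IntegrableOn g Ω := by
    apply Integrable.add (integrableOn_const hΩfin.ne)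
    exact hrpow_int.const_mul K₂
  refine ⟨(∫ x in Ω, g x) + 1, by positivity, ?_⟩
  rintro ε ⟨hε0, hεR⟩
  have hψpos : ∀ t : ℝ, 0 < psi ε t := psi_pos hε0
  -- a.e. pointwise bound
  have hae : ∀ᵐ x ∂(volume.restrict Ω),
      ((psi ε ‖x‖) ^ α * lap u x
        + α * (psi ε ‖x‖) ^ (α - 1) *
          (inner ℝ (gradient (fun y : EuclideanSpace ℝ (Fin N) => psi ε ‖y‖) x) (gradient u x) : ℝ)) ^ 2 ≤ g x := by
    have hne : ∀ᵐ x ∂(volume.restrict Ω), x ≠ (0 : EuclideanSpace ℝ (Fin N)) := by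
      rw [ae_iff]
      have : {x : EuclideanSpace ℝ (Fin N) | ¬ x ≠ 0} = {(0 : EuclideanSpace ℝ (Fin N))} := by ext y; simp
      rw [this]
      exact le_antisymm (le_trans (Measure.restrict_le_self _)
        (le_of_eq (volume_singleton_zero (by omega)))) zero_le
    filter_upwards [ae_restrict_mem hΩo.measurableSet, hne] with x hxΩ hx0
    set ψ := psi ε ‖x‖ with hψ
    have hψp : 0 < ψ := hψpos ‖x‖
    have hxr : ‖x‖ < r := by simpa [Metric.mem_ball, dist_zero_right] using hrΩ hxΩ
    have hψD : ψ ≤ D := by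
      have := psi_le_add (x := ‖x‖) hε0
      rw [abs_of_nonneg (norm_nonneg x)] at this
      linarith
    set T₁ : ℝ := ψ ^ α * lap u x with hT₁
    set I : ℝ := (inner ℝ (gradient (fun y : EuclideanSpace ℝ (Fin N) => psi ε ‖y‖) x) (gradient u x) : ℝ) with hI
    set T₂ : ℝ := α * ψ ^ (α - 1) * I with hT₂
    have hT₁sq : T₁ ^ 2 ≤ (D ^ α) ^ 2 * M₁ ^ 2 := by
      have h1 : ψ ^ α ≤ D ^ α := Real.rpow_le_rpow hψp.le hψD hα0.le
      have h2 : (ψ ^ α) ^ 2 ≤ (D ^ α) ^ 2 :=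
        pow_le_pow_left₀ (Real.rpow_nonneg hψp.le _) h1 2
      have h3 : (lap u x) ^ 2 ≤ M₁ ^ 2 := by
        rw [← sq_abs]
        exact pow_le_pow_left₀ (abs_nonneg _) (hM₁ x) 2
      calc T₁ ^ 2 = (ψ ^ α) ^ 2 * (lap u x) ^ 2 := by rw [hT₁]; ring
        _ ≤ (D ^ α) ^ 2 * M₁ ^ 2 := by
            apply mul_le_mul h2 h3 (sq_nonneg _) (sq_nonneg _)
    have hIle : |I| ≤ M₂ := by
      have hlip : LipschitzWith 1 (fun y : EuclideanSpace ℝ (Fin N) => psi ε ‖y‖) := by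
        have h := (psi_lipschitz hε0).comp (lipschitzWith_one_norm (E := EuclideanSpace ℝ (Fin N))); rw [mul_one] at h; exact h
      calc |I| ≤ ‖gradient (fun y : EuclideanSpace ℝ (Fin N) => psi ε ‖y‖) x‖ * ‖gradient u x‖ :=
            abs_real_inner_le_norm _ _
        _ ≤ 1 * M₂ :=
            mul_le_mul (norm_gradient_le_one hlip x) (hM₂ x) (norm_nonneg _) zero_le_one
        _ = M₂ := one_mul _
    have hψsq : (ψ ^ (α - 1)) ^ 2 ≤ c₄ * (1 + ‖x‖ ^ (2 * α - 2)) := by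
      have hsqrw : (ψ ^ (α - 1)) ^ 2 = ψ ^ (2 * α - 2) := by
        rw [← Real.rpow_natCast (ψ ^ (α - 1)) 2, ← Real.rpow_mul hψp.le]
        congr 1
        push_cast
        ring
      rw [hsqrw]
      have hxnn : 0 ≤ ‖x‖ ^ (2 * α - 2) := Real.rpow_nonneg (norm_nonneg x) _
      rcases le_or_gt 0 (2 * α - 2) with hnn | hneg
      · calc ψ ^ (2 * α - 2) ≤ D ^ (2 * α - 2) := Real.rpow_le_rpow hψp.le hψD hnn
          _ ≤ c₄ := le_max_left _ _
          _ ≤ c₄ * (1 + ‖x‖ ^ (2 * α - 2)) := le_mul_of_one_le_right hc₄0 (by linarith)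
      · have hxpos : (0:ℝ) < ‖x‖ := norm_pos_iff.mpr hx0
        have hge : 3 / 8 * ‖x‖ ≤ ψ := by
          have := psi_ge hε0 ‖x‖
          rwa [abs_of_nonneg (norm_nonneg x)] at this
        calc ψ ^ (2 * α - 2) ≤ (3 / 8 * ‖x‖) ^ (2 * α - 2) :=
              Real.rpow_le_rpow_of_nonpos (by positivity) hge hneg.le
          _ = (3 / 8 : ℝ) ^ (2 * α - 2) * ‖x‖ ^ (2 * α - 2) :=
              Real.mul_rpow (by norm_num) (norm_nonneg x)
          _ ≤ c₄ * ‖x‖ ^ (2 * α - 2) :=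
              mul_le_mul_of_nonneg_right (le_max_right _ _) hxnn
          _ ≤ c₄ * (1 + ‖x‖ ^ (2 * α - 2)) :=
              mul_le_mul_of_nonneg_left (by linarith) hc₄0
    have hT₂sq : T₂ ^ 2 ≤ α ^ 2 * (c₄ * (1 + ‖x‖ ^ (2 * α - 2))) * M₂ ^ 2 := by
      have hI2 : I ^ 2 ≤ M₂ ^ 2 := by
        rw [← sq_abs]
        exact pow_le_pow_left₀ (abs_nonneg _) hIle 2
      calc T₂ ^ 2 = α ^ 2 * (ψ ^ (α - 1)) ^ 2 * I ^ 2 := by rw [hT₂]; ring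
        _ ≤ α ^ 2 * (ψ ^ (α - 1)) ^ 2 * M₂ ^ 2 :=
            mul_le_mul_of_nonneg_left hI2 (by positivity)
        _ ≤ α ^ 2 * (c₄ * (1 + ‖x‖ ^ (2 * α - 2))) * M₂ ^ 2 :=
            mul_le_mul_of_nonneg_right
              (mul_le_mul_of_nonneg_left hψsq (sq_nonneg α)) (sq_nonneg M₂)
    have hsum : (T₁ + T₂) ^ 2 ≤ 2 * T₁ ^ 2 + 2 * T₂ ^ 2 := by nlinarith [sq_nonneg (T₁ - T₂)]
    have : (T₁ + T₂) ^ 2 ≤ g x := by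
      have hgx : g x = 2 * ((D ^ α) ^ 2 * M₁ ^ 2)
          + 2 * (α ^ 2 * (c₄ * (1 + ‖x‖ ^ (2 * α - 2))) * M₂ ^ 2) := by
        rw [hg, hK₁, hK₂]; ring
      rw [hgx]
      linarith
    exact this
  have hint : (∫ x in Ω, ((psi ε ‖x‖) ^ α * lap u x
      + α * (psi ε ‖x‖) ^ (α - 1) *
        (inner ℝ (gradient (fun y : EuclideanSpace ℝ (Fin N) => psi ε ‖y‖) x) (gradient u x) : ℝ)) ^ 2)
      ≤ ∫ x in Ω, g x := by
    apply integral_mono_of_nonneg (Filter.Eventually.of_forall (fun x => sq_nonneg _)) hgint hae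
  linarith
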